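/- arXiv:2508.16797 — 5 statements merged into one kernel-verified Lean document; each statement's English description precedes it below -/
import Mathlib

section
/- Fix 0 < c < 1 and reals e, A, B, and define g : [0,1]² → ℝ by g(x,y) = e - A·v₁(x)v₁(y) + B·v₂(x)v₂(y), where v₁, v₂ are the orthogonal step functions associated with c. Then the degree function d(x) = ∫₀¹ g(x,y) dy is identically equal to e, and the triangle density τ(g) = ∫∫∫ g(x,y)g(y,z)g(z,x) equals e³ - c³(A³ - B³). -/
/-!
Writing `φ = (1, v₁, v₂)` and `λ = (e, -A, B)`, the graphon is the finite-rank kernel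
`g(x, y) = ∑ₖ λₖ φₖ(x) φₖ(y)`, and the `φₖ` are orthogonal on `[0, 1]` with squared norms
`(1, c, c)`. For such a kernel each `φₖ` is an eigenfunction with eigenvalue `λₖ ‖φₖ‖²`, so the
degree function is `e · φ₀ = e`, and the triangle density, the trace of the cube of the integral
operator, is `∑ₖ (λₖ ‖φₖ‖²)³ = e³ - c³A³ + c³B³`.
-/

open MeasureTheory Set

section SpectralKernel

variable {α ι : Type*} [MeasurableSpace α] {μ : Measure α} [Fintype ι]
  {φ : ι → α → ℝ} {n : ι → ℝ}

def spectralKernel (φ : ι → α → ℝ) (l : ι → ℝ) (x y : α) : ℝ := ∑ k, l k * φ k x * φ k y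

theorem integrable_spectralKernel_mul (hint : ∀ i j, Integrable (fun x => φ i x * φ j x) μ)
    (l : ι → ℝ) (x : α) (j : ι) : Integrable (fun y => spectralKernel φ l x y * φ j y) μ := by
  simp only [spectralKernel, Finset.sum_mul, mul_assoc]
  exact integrable_finsetSum _ fun k _ => ((hint k j).const_mul _).const_mul _

theorem integral_spectralKernel_mul [DecidableEq ι]
    (hint : ∀ i j, Integrable (fun x => φ i x * φ j x) μ)
    (horth : ∀ i j, ∫ x, φ i x * φ j x ∂μ = if i = j then n i else 0)
    (l : ι → ℝ) (x : α) (j : ι) :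
    ∫ y, spectralKernel φ l x y * φ j y ∂μ = l j * n j * φ j x := by
  simp only [spectralKernel, Finset.sum_mul, mul_assoc]
  rw [integral_finsetSum _ fun k _ => ((hint k j).const_mul _).const_mul _]
  simp only [integral_const_mul, horth, mul_ite, mul_zero, Finset.sum_ite_eq',
    Finset.mem_univ, if_true]
  ring

theorem integral_spectralKernel_mul_spectralKernel [DecidableEq ι]
    (hint : ∀ i j, Integrable (fun x => φ i x * φ j x) μ)
    (horth : ∀ i j, ∫ x, φ i x * φ j x ∂μ = if i = j then n i else 0)
    (l m : ι → ℝ) (x y : α) :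
    ∫ z, spectralKernel φ l x z * spectralKernel φ m z y ∂μ =
      spectralKernel φ (l * m * n) x y := by
  have hexp : ∀ z, spectralKernel φ l x z * spectralKernel φ m z y
      = ∑ k, m k * φ k y * (spectralKernel φ l x z * φ k z) := fun z => by
    simp only [spectralKernel, Finset.mul_sum]
    exact Finset.sum_congr rfl fun _ _ => by ring
  simp only [hexp]
  rw [integral_finsetSum _ fun k _ => (integrable_spectralKernel_mul hint l x k).const_mul _]
  simp only [integral_const_mul, integral_spectralKernel_mul hint horth]
  exact Finset.sum_congr rfl fun _ _ => by simp only [Pi.mul_apply]; ring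

theorem integral_spectralKernel_diag [DecidableEq ι]
    (hint : ∀ i j, Integrable (fun x => φ i x * φ j x) μ)
    (horth : ∀ i j, ∫ x, φ i x * φ j x ∂μ = if i = j then n i else 0) (l : ι → ℝ) :
    ∫ x, spectralKernel φ l x x ∂μ = ∑ k, l k * n k := by
  simp only [spectralKernel, mul_assoc]
  rw [integral_finsetSum _ fun k _ => (hint k k).const_mul _]
  simp only [integral_const_mul, horth, if_true]

theorem integral_triangle_spectralKernel [DecidableEq ι]
    (hint : ∀ i j, Integrable (fun x => φ i x * φ j x) μ)
    (horth : ∀ i j, ∫ x, φ i x * φ j x ∂μ = if i = j then n i else 0) (l : ι → ℝ) :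
    ∫ x, ∫ y, ∫ z, spectralKernel φ l x y * spectralKernel φ l y z * spectralKernel φ l z x
      ∂μ ∂μ ∂μ = ∑ k, (l k * n k) ^ 3 := by
  have hz : ∀ x y,
      ∫ z, spectralKernel φ l x y * spectralKernel φ l y z * spectralKernel φ l z x ∂μ
        = spectralKernel φ l x y * spectralKernel φ (l * l * n) y x := fun x y => by
    simp only [mul_assoc]
    rw [integral_const_mul, ← mul_assoc, integral_spectralKernel_mul_spectralKernel hint horth]
  have hy : ∀ x, ∫ y, spectralKernel φ l x y * spectralKernel φ (l * l * n) y x ∂μ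
      = spectralKernel φ (l * (l * l * n) * n) x x := fun x =>
    integral_spectralKernel_mul_spectralKernel hint horth _ _ x x
  simp only [hz, hy, integral_spectralKernel_diag hint horth]
  exact Finset.sum_congr rfl fun _ _ => by simp only [Pi.mul_apply]; ring

end SpectralKernel

theorem intervalIntegrable_and_integral_of_eqOn_Ioo {f : ℝ → ℝ} {a b k : ℝ} (hab : a ≤ b)
    (h : EqOn f (fun _ => k) (Ioo a b)) :
    IntervalIntegrable f volume a b ∧ ∫ x in a..b, f x = (b - a) * k := by
  refine ⟨(intervalIntegrable_iff_integrableOn_Ioo_of_le hab).2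
    ((integrableOn_const measure_Ioo_lt_top.ne).congr_fun h.symm measurableSet_Ioo), ?_⟩
  rw [intervalIntegral.integral_of_le hab, integral_Ioc_eq_integral_Ioo,
    setIntegral_congr_fun measurableSet_Ioo h, setIntegral_const, Real.volume_real_Ioo_of_le hab,
    smul_eq_mul]

theorem intervalIntegrable_and_integral_of_eqOn_Ioo₃ {f : ℝ → ℝ} {a b c d k₁ k₂ k₃ : ℝ}
    (hab : a ≤ b) (hbc : b ≤ c) (hcd : c ≤ d) (h₁ : EqOn f (fun _ => k₁) (Ioo a b))
    (h₂ : EqOn f (fun _ => k₂) (Ioo b c)) (h₃ : EqOn f (fun _ => k₃) (Ioo c d)) :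
    IntervalIntegrable f volume a d ∧
      ∫ x in a..d, f x = (b - a) * k₁ + (c - b) * k₂ + (d - c) * k₃ := by
  obtain ⟨i₁, e₁⟩ := intervalIntegrable_and_integral_of_eqOn_Ioo hab h₁
  obtain ⟨i₂, e₂⟩ := intervalIntegrable_and_integral_of_eqOn_Ioo hbc h₂
  obtain ⟨i₃, e₃⟩ := intervalIntegrable_and_integral_of_eqOn_Ioo hcd h₃
  refine ⟨(i₁.trans i₂).trans i₃, ?_⟩
  rw [← intervalIntegral.integral_add_adjacent_intervals (i₁.trans i₂) i₃,
    ← intervalIntegral.integral_add_adjacent_intervals i₁ i₂, e₁, e₂, e₃]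

theorem intervalIntegrable_and_integral_comp_steps {c s t : ℝ} (hc : 0 ≤ c) (hc1 : c ≤ 1)
    {v₁ v₂ : ℝ → ℝ} (hv₁ : ∀ x, v₁ x = if x < c / 2 then 1 else if x < c then -1 else 0)
    (hv₂ : ∀ x, v₂ x = if x < c then s else t) (F : ℝ → ℝ → ℝ) :
    IntervalIntegrable (fun x => F (v₁ x) (v₂ x)) volume 0 1 ∧
      ∫ x in (0 : ℝ)..1, F (v₁ x) (v₂ x) = c / 2 * F 1 s + c / 2 * F (-1) s + (1 - c) * F 0 t := by
  have hc2 : c / 2 ≤ c := by linarith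
  have h₁ : EqOn (fun x => F (v₁ x) (v₂ x)) (fun _ => F 1 s) (Ioo 0 (c / 2)) := by
    rintro x ⟨-, hx⟩
    simp only [hv₁, hv₂, if_pos hx, if_pos (hx.trans_le hc2)]
  have h₂ : EqOn (fun x => F (v₁ x) (v₂ x)) (fun _ => F (-1) s) (Ioo (c / 2) c) := by
    rintro x ⟨hx, hx'⟩
    simp only [hv₁, hv₂, if_neg hx.le.not_gt, if_pos hx']
  have h₃ : EqOn (fun x => F (v₁ x) (v₂ x)) (fun _ => F 0 t) (Ioo c 1) := by
    rintro x ⟨hx, -⟩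
    simp only [hv₁, hv₂, if_neg (hc2.trans hx.le).not_gt, if_neg hx.le.not_gt]
  obtain ⟨hint, heq⟩ :=
    intervalIntegrable_and_integral_of_eqOn_Ioo₃ (by linarith) hc2 hc1 h₁ h₂ h₃
  exact ⟨hint, heq.trans (by ring)⟩

def stepBasis (v₁ v₂ : ℝ → ℝ) (i : Fin 3) (x : ℝ) : ℝ := ![1, v₁ x, v₂ x] i

theorem integrable_stepBasis_mul {c s t : ℝ} (hc : 0 ≤ c) (hc1 : c ≤ 1) {v₁ v₂ : ℝ → ℝ}
    (hv₁ : ∀ x, v₁ x = if x < c / 2 then 1 else if x < c then -1 else 0)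
    (hv₂ : ∀ x, v₂ x = if x < c then s else t) (i j : Fin 3) :
    Integrable (fun x => stepBasis v₁ v₂ i x * stepBasis v₁ v₂ j x) (volume.restrict (Ioc 0 1)) :=
  (intervalIntegrable_and_integral_comp_steps hc hc1 hv₁ hv₂
    fun p q => ![1, p, q] i * ![1, p, q] j).1.1

theorem integral_stepBasis_mul {c : ℝ} (hc : 0 < c) (hc1 : c < 1) {v₁ v₂ : ℝ → ℝ}
    (hv₁ : ∀ x, v₁ x = if x < c / 2 then 1 else if x < c then -1 else 0)
    (hv₂ : ∀ x, v₂ x = if x < c then Real.sqrt (1 - c) else -c / Real.sqrt (1 - c))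
    (i j : Fin 3) :
    ∫ x in Ioc 0 1, stepBasis v₁ v₂ i x * stepBasis v₁ v₂ j x =
      if i = j then ![1, c, c] i else 0 := by
  set s := Real.sqrt (1 - c)
  have hs0 : s ≠ 0 := (Real.sqrt_pos.2 (by linarith)).ne'
  have hs2 : s ^ 2 = 1 - c := Real.sq_sqrt (by linarith)
  have hmean : c * s + (1 - c) * (-c / s) = 0 := by
    field_simp
    linear_combination c * hs2
  have hsq : c * s ^ 2 + (1 - c) * (-c / s) ^ 2 = c := by
    field_simp
    linear_combination (s ^ 2 - c) * hs2
  rw [← intervalIntegral.integral_of_le zero_le_one]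
  refine (intervalIntegrable_and_integral_comp_steps hc.le hc1.le hv₁ hv₂
    fun p q => ![1, p, q] i * ![1, p, q] j).2.trans ?_
  fin_cases i <;> fin_cases j <;>
    simp only [Fin.isValue, Fin.zero_eta, Fin.mk_one, Fin.reduceFinMk, Fin.reduceEq,
      Matrix.cons_val, Matrix.cons_val_zero, Matrix.cons_val_one, reduceIte, mul_one, mul_zero]
    <;> linarith [hmean, hsq]

theorem stmt_8 (c e A B : ℝ) (hc : 0 < c) (hc1 : c < 1)
    (v₁ v₂ : ℝ → ℝ)
    (hv₁ : ∀ x, v₁ x = if x < c / 2 then 1 else if x < c then -1 else 0)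
    (hv₂ : ∀ x, v₂ x = if x < c then Real.sqrt (1 - c) else -c / Real.sqrt (1 - c))
    (g : ℝ → ℝ → ℝ)
    (hg : ∀ x y, g x y = e - A * v₁ x * v₁ y + B * v₂ x * v₂ y) :
    (∀ x, (∫ y in (0 : ℝ)..1, g x y) = e) ∧
    (∫ x in (0 : ℝ)..1, ∫ y in (0 : ℝ)..1, ∫ z in (0 : ℝ)..1, g x y * g y z * g z x) =
      e ^ 3 - c ^ 3 * (A ^ 3 - B ^ 3) := by
  have hint := integrable_stepBasis_mul hc.le hc1.le hv₁ hv₂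
  have horth := integral_stepBasis_mul hc hc1 hv₁ hv₂
  have hg_kernel : g = spectralKernel (stepBasis v₁ v₂) ![e, -A, B] := by
    ext x y
    simp only [hg, spectralKernel, stepBasis, Fin.sum_univ_three, Matrix.cons_val_zero,
      Matrix.cons_val_one, Matrix.cons_val]
    ring
  simp_rw [intervalIntegral.integral_of_le zero_le_one, hg_kernel]
  refine ⟨fun x => ?_, ?_⟩
  · simpa [stepBasis] using integral_spectralKernel_mul hint horth ![e, -A, B] x 0
  · rw [integral_triangle_spectralKernel hint horth]
    simp only [Fin.sum_univ_three, Matrix.cons_val_zero, Matrix.cons_val_one, Matrix.cons_val]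
    ring
end

section
/- Let Δ : [0,1]² → ℝ be a bounded symmetric measurable function with ∫₀¹ Δ(x,y) dx = 0 for almost every y. Then for any e ∈ ℝ, τ(e + Δ) = e³ + τ(Δ), where τ(f) = ∫∫∫ f(x,y)f(y,z)f(z,x). -/
open MeasureTheory Function

/-! Under the product measure μ³ the cyclic shift (x, y, z) ↦ (y, z, x) is measure preserving, so
after expanding (e + Δ x y)(e + Δ y z)(e + Δ z x) the terms of degree one and two in Δ integrate
to 3e² ∫ Δ z x + 3e ∫ Δ z x · Δ x y. Both vanish: integrating in z first produces the degree
∫ Δ z x dz, which is zero for almost every x. -/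

variable {α : Type*} [MeasurableSpace α]

noncomputable def triangleDensity (μ : Measure α) (W : α → α → ℝ) : ℝ :=
  ∫ x, ∫ y, ∫ z, W x y * W y z * W z x ∂μ ∂μ ∂μ

theorem integral_integral_integral_eq_integral_prod {β γ E : Type*} [MeasurableSpace β]
    [MeasurableSpace γ] [NormedAddCommGroup E] [NormedSpace ℝ E] {μ : Measure α}
    {ν : Measure β} {ρ : Measure γ} [SFinite μ] [SFinite ν] [SFinite ρ] {F : α → β → γ → E}
    (hF : Integrable (fun p : α × β × γ => F p.1 p.2.1 p.2.2) (μ.prod (ν.prod ρ))) :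
    ∫ x, ∫ y, ∫ z, F x y z ∂ρ ∂ν ∂μ = ∫ p, F p.1 p.2.1 p.2.2 ∂μ.prod (ν.prod ρ) := by
  rw [integral_prod _ hF]
  refine integral_congr_ae ?_
  filter_upwards [hF.prod_right_ae] with x hx
  exact (integral_prod _ hx).symm

def MeasurableEquiv.prodRotate : α × α × α ≃ᵐ α × α × α :=
  MeasurableEquiv.prodComm.trans MeasurableEquiv.prodAssoc

@[simp]
lemma MeasurableEquiv.prodRotate_apply (x y z : α) : prodRotate (x, y, z) = (y, z, x) := rfl

section Rotation

open MeasurableEquiv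

variable {μ : Measure α} [SFinite μ] {g : α × α × α → ℝ}

lemma measurePreserving_prodRotate :
    MeasurePreserving prodRotate (μ.prod (μ.prod μ)) (μ.prod (μ.prod μ)) :=
  (measurePreserving_prodAssoc μ μ μ).comp Measure.measurePreserving_swap

lemma MeasureTheory.Integrable.comp_prodRotate (hg : Integrable g (μ.prod (μ.prod μ))) :
    Integrable (fun p => g (prodRotate p)) (μ.prod (μ.prod μ)) :=
  measurePreserving_prodRotate.integrable_comp_of_integrable hg

lemma integral_comp_prodRotate :
    ∫ p, g (prodRotate p) ∂μ.prod (μ.prod μ) = ∫ p, g p ∂μ.prod (μ.prod μ) :=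
  measurePreserving_prodRotate.integral_comp' g

lemma integral_add_comp_prodRotate_add (hg : Integrable g (μ.prod (μ.prod μ))) :
    ∫ p, g p + g (prodRotate p) + g (prodRotate (prodRotate p)) ∂μ.prod (μ.prod μ) =
      3 * ∫ p, g p ∂μ.prod (μ.prod μ) := by
  have hg₂ : Integrable (fun p => g p + g (prodRotate p)) (μ.prod (μ.prod μ)) :=
    hg.add hg.comp_prodRotate
  rw [integral_add hg₂ hg.comp_prodRotate.comp_prodRotate, integral_add hg hg.comp_prodRotate,
    integral_comp_prodRotate, integral_comp_prodRotate (g := fun p => g (prodRotate p)),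
    integral_comp_prodRotate]
  ring

end Rotation

section BoundedFunction

variable {W : α → α → ℝ} {C : ℝ} {β : Type*} [MeasurableSpace β] {ν : Measure β} {f g : β → α}

lemma aestronglyMeasurable_comp₂ (hW : Measurable (uncurry W)) (hf : Measurable f)
    (hg : Measurable g) : AEStronglyMeasurable (fun p => W (f p) (g p)) ν :=
  (hW.comp (hf.prodMk hg)).aestronglyMeasurable

lemma integrable_comp₂_of_abs_le [IsFiniteMeasure ν] (hW : Measurable (uncurry W))
    (hC : ∀ x y, |W x y| ≤ C) (hf : Measurable f) (hg : Measurable g) :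
    Integrable (fun p => W (f p) (g p)) ν :=
  .of_bound (aestronglyMeasurable_comp₂ hW hf hg) C (ae_of_all _ fun _ => hC _ _)

lemma MeasureTheory.Integrable.mul_comp₂_of_abs_le {φ : β → ℝ} (hφ : Integrable φ ν)
    (hW : Measurable (uncurry W)) (hC : ∀ x y, |W x y| ≤ C) (hf : Measurable f) (hg : Measurable g) :
    Integrable (fun p => φ p * W (f p) (g p)) ν :=
  hφ.mul_bdd (aestronglyMeasurable_comp₂ hW hf hg) (ae_of_all _ fun _ => hC _ _)

variable {μ : Measure α} [IsFiniteMeasure μ]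

lemma integrable_triangle (hW : Measurable (uncurry W)) (hC : ∀ x y, |W x y| ≤ C) :
    Integrable (fun p : α × α × α => W p.1 p.2.1 * W p.2.1 p.2.2 * W p.2.2 p.1)
      (μ.prod (μ.prod μ)) :=
  ((integrable_comp₂_of_abs_le hW hC measurable_fst measurable_snd.fst).mul_comp₂_of_abs_le hW hC
    measurable_snd.fst measurable_snd.snd).mul_comp₂_of_abs_le hW hC
    measurable_snd.snd measurable_fst

lemma triangleDensity_eq_integral_prod (hW : Measurable (uncurry W)) (hC : ∀ x y, |W x y| ≤ C) :
    triangleDensity μ W =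
      ∫ p, W p.1 p.2.1 * W p.2.1 p.2.2 * W p.2.2 p.1 ∂μ.prod (μ.prod μ) :=
  integral_integral_integral_eq_integral_prod (integrable_triangle hW hC)

end BoundedFunction

open MeasurableEquiv in
theorem triangleDensity_const_add {μ : Measure α} [IsProbabilityMeasure μ] {Δ : α → α → ℝ}
    {C : ℝ} (hΔ : Measurable (uncurry Δ)) (hC : ∀ x y, |Δ x y| ≤ C)
    (hdeg : ∀ᵐ y ∂μ, ∫ x, Δ x y ∂μ = 0) (e : ℝ) :
    triangleDensity μ (fun x y => e + Δ x y) = e ^ 3 + triangleDensity μ Δ := by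
  set ν := μ.prod (μ.prod μ)
  set a : α × α × α → ℝ := fun p => Δ p.2.2 p.1
  set b : α × α × α → ℝ := fun p => Δ p.2.2 p.1 * Δ p.1 p.2.1
  set h : α × α × α → ℝ := fun p => e ^ 2 * a p + e * b p
  have ha : Integrable a ν := integrable_comp₂_of_abs_le hΔ hC measurable_snd.snd measurable_fst
  have hb : Integrable b ν := ha.mul_comp₂_of_abs_le hΔ hC measurable_fst measurable_snd.fst
  have hh : Integrable h ν := (ha.const_mul _).add (hb.const_mul _)
  have ha0 : ∫ p, a p ∂ν = 0 := by
    rw [← integral_integral_integral_eq_integral_prod (F := fun x _ z => Δ z x) ha]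
    refine integral_eq_zero_of_ae ?_
    filter_upwards [hdeg] with x hx
    simp [hx]
  have hb0 : ∫ p, b p ∂ν = 0 := by
    rw [← integral_integral_integral_eq_integral_prod (F := fun x y z => Δ z x * Δ x y) hb]
    refine integral_eq_zero_of_ae ?_
    filter_upwards [hdeg] with x hx
    simp [integral_mul_const, hx]
  have hh0 : ∫ p, h p ∂ν = 0 := by
    rw [integral_add (ha.const_mul _) (hb.const_mul _), integral_const_mul, integral_const_mul,
      ha0, hb0]
    ring
  have hexpand : ∀ p : α × α × α,
      (e + Δ p.1 p.2.1) * (e + Δ p.2.1 p.2.2) * (e + Δ p.2.2 p.1) =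
        e ^ 3 + ((h p + h (prodRotate p) + h (prodRotate (prodRotate p))) +
          Δ p.1 p.2.1 * Δ p.2.1 p.2.2 * Δ p.2.2 p.1) := by
    rintro ⟨x, y, z⟩
    simp only [h, a, b, prodRotate_apply]
    ring
  have hcyc : Integrable (fun p => h p + h (prodRotate p) + h (prodRotate (prodRotate p))) ν :=
    (hh.add hh.comp_prodRotate).add hh.comp_prodRotate.comp_prodRotate
  have hrest : Integrable (fun p => (h p + h (prodRotate p) + h (prodRotate (prodRotate p))) +
      Δ p.1 p.2.1 * Δ p.2.1 p.2.2 * Δ p.2.2 p.1) ν :=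
    hcyc.add (integrable_triangle hΔ hC)
  have hbound : ∀ x y, |e + Δ x y| ≤ |e| + C := fun x y =>
    (abs_add_le _ _).trans (by gcongr; exact hC x y)
  rw [triangleDensity_eq_integral_prod (measurable_const.add hΔ) hbound,
    triangleDensity_eq_integral_prod hΔ hC, integral_congr_ae (ae_of_all _ hexpand),
    integral_add (integrable_const _) hrest, integral_add hcyc (integrable_triangle hΔ hC),
    integral_const, integral_add_comp_prodRotate_add hh, hh0]
  simp [ν]

theorem stmt_10_general (Δ : ℝ → ℝ → ℝ) (e : ℝ)
    (hmeas : Measurable (Function.uncurry Δ))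
    (hbdd : ∃ C : ℝ, ∀ x y, |Δ x y| ≤ C)
    (hdeg : ∀ᵐ y ∂(MeasureTheory.volume.restrict (Set.Icc (0 : ℝ) 1)),
      (∫ x in (0 : ℝ)..1, Δ x y) = 0) :
    (∫ x in (0 : ℝ)..1, ∫ y in (0 : ℝ)..1, ∫ z in (0 : ℝ)..1,
        (e + Δ x y) * (e + Δ y z) * (e + Δ z x)) =
      e ^ 3 + (∫ x in (0 : ℝ)..1, ∫ y in (0 : ℝ)..1, ∫ z in (0 : ℝ)..1,
        Δ x y * Δ y z * Δ z x) := by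
  obtain ⟨C, hC⟩ := hbdd
  have : IsProbabilityMeasure (volume.restrict (Set.Icc (0 : ℝ) 1)) := ⟨by simp⟩
  simp only [intervalIntegral.integral_of_le zero_le_one, ← integral_Icc_eq_integral_Ioc]
    at hdeg ⊢
  exact triangleDensity_const_add hmeas hC hdeg e

theorem stmt_10 (Δ : ℝ → ℝ → ℝ) (e : ℝ)
    (hmeas : Measurable (Function.uncurry Δ))
    (hsym : ∀ x y, Δ x y = Δ y x)
    (hbdd : ∃ C : ℝ, ∀ x y, |Δ x y| ≤ C)
    (hdeg : ∀ᵐ y ∂(MeasureTheory.volume.restrict (Set.Icc (0 : ℝ) 1)),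
      (∫ x in (0 : ℝ)..1, Δ x y) = 0) :
    (∫ x in (0 : ℝ)..1, ∫ y in (0 : ℝ)..1, ∫ z in (0 : ℝ)..1,
        (e + Δ x y) * (e + Δ y z) * (e + Δ z x)) =
      e ^ 3 + (∫ x in (0 : ℝ)..1, ∫ y in (0 : ℝ)..1, ∫ z in (0 : ℝ)..1,
        Δ x y * Δ y z * Δ z x) :=
  stmt_10_general Δ e hmeas hbdd hdeg
end

section
/- Fix 0 < c < 1 and reals e, A, B, D, and define g(x,y) = e - A·v₁(x)v₁(y) + B·v₂(x)v₂(y) + (D/2)·√(1-c)·(v₂(x) + v₂(y)), with v₁, v₂ the orthogonal step functions associated with c. Then the degree function satisfies d(x) = e + (1-c)D/2 for x < c and d(x) = e - cD/2 for x ≥ c, the edge density is ε(g) = e, and the triangle density is τ(g) = e³ + (3/4)·e·c(1-c)·D² + (3/4)·c²(1-c)·B·D² + c³(B³ - A³). -/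
/-!
The graphon `g` takes a single value on each product of two podes, so every integral in
sight is a finite sum over podes weighted by their widths `c/2, c/2, 1 - c`; this reduction
holds for any step kernel, and what is left is a polynomial identity in `√(1 - c)`.
-/

open MeasureTheory Set Finset

noncomputable section

def pode (c x : ℝ) : Fin 3 := if x < c / 2 then 0 else if x < c then 1 else 2

def podeWidth (c : ℝ) : Fin 3 → ℝ := ![c / 2, c / 2, 1 - c]

lemma intervalIntegrable_and_integral_eq_of_eqOn_Ioo {f : ℝ → ℝ} {a b k : ℝ} (hab : a ≤ b)
    (hf : EqOn f (fun _ => k) (Ioo a b)) :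
    IntervalIntegrable f volume a b ∧ ∫ x in a..b, f x = (b - a) * k := by
  refine ⟨intervalIntegrable_const.congr_uIoo (uIoo_of_le hab ▸ hf.symm), ?_⟩
  rw [intervalIntegral.integral_congr_Ioo_of_le hab hf, intervalIntegral.integral_const,
    smul_eq_mul]

theorem integral_comp_pode {c : ℝ} (hc : 0 ≤ c) (hc1 : c ≤ 1) (F : Fin 3 → ℝ) :
    ∫ x in (0 : ℝ)..1, F (pode c x) = ∑ i, podeWidth c i * F i := by
  have hc2 : c / 2 ≤ c := by linarith
  obtain ⟨int₀, eq₀⟩ := intervalIntegrable_and_integral_eq_of_eqOn_Ioo (k := F 0)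
    (by linarith : 0 ≤ c / 2) fun x hx => show F (pode c x) = F 0 by simp [pode, hx.2]
  obtain ⟨int₁, eq₁⟩ := intervalIntegrable_and_integral_eq_of_eqOn_Ioo (k := F 1) hc2
    fun x hx => show F (pode c x) = F 1 by simp [pode, hx.2, not_lt.2 hx.1.le]
  obtain ⟨int₂, eq₂⟩ := intervalIntegrable_and_integral_eq_of_eqOn_Ioo (k := F 2) hc1
    fun x hx => show F (pode c x) = F 2 by
      simp [pode, not_lt.2 hx.1.le, not_lt.2 (hc2.trans hx.1.le)]
  rw [← intervalIntegral.integral_add_adjacent_intervals (int₀.trans int₁) int₂,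
    ← intervalIntegral.integral_add_adjacent_intervals int₀ int₁, eq₀, eq₁, eq₂]
  simp only [Fin.sum_univ_three, podeWidth, Matrix.cons_val]
  ring

section StepKernel

variable {ι : Type*} [Fintype ι] {p : ℝ → ι} {w : ι → ℝ}
  (hp : ∀ F : ι → ℝ, ∫ x in (0 : ℝ)..1, F (p x) = ∑ i, w i * F i)
include hp

theorem edgeDensity_of_step (G : ι → ι → ℝ) :
    ∫ x in (0 : ℝ)..1, ∫ y in (0 : ℝ)..1, G (p x) (p y) =
      ∑ i, w i * ∑ j, w j * G i j := by
  simp only [hp (G _)]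
  exact hp fun i => ∑ j, w j * G i j

theorem triangleDensity_of_step (G : ι → ι → ℝ) :
    ∫ x in (0 : ℝ)..1, ∫ y in (0 : ℝ)..1, ∫ z in (0 : ℝ)..1,
        G (p x) (p y) * G (p y) (p z) * G (p z) (p x) =
      ∑ i, w i * ∑ j, w j * ∑ k, w k * (G i j * G j k * G k i) := by
  have inner : ∀ x y, ∫ z in (0 : ℝ)..1, G (p x) (p y) * G (p y) (p z) * G (p z) (p x) =
      ∑ k, w k * (G (p x) (p y) * G (p y) k * G k (p x)) := fun x y =>
    hp fun k => G (p x) (p y) * G (p y) k * G k (p x)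
  have middle : ∀ x, ∫ y in (0 : ℝ)..1, ∑ k, w k * (G (p x) (p y) * G (p y) k * G k (p x)) =
      ∑ j, w j * ∑ k, w k * (G (p x) j * G j k * G k (p x)) := fun x =>
    hp fun j => ∑ k, w k * (G (p x) j * G j k * G k (p x))
  simp only [inner, middle]
  exact hp fun i => ∑ j, w j * ∑ k, w k * (G i j * G j k * G k i)

end StepKernel

def podeV₁ : Fin 3 → ℝ := ![1, -1, 0]

def podeV₂ (c : ℝ) : Fin 3 → ℝ := ![√(1 - c), √(1 - c), -c / √(1 - c)]

def tripodalKernel (c e A B D : ℝ) (i j : Fin 3) : ℝ :=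
  e - A * podeV₁ i * podeV₁ j + B * podeV₂ c i * podeV₂ c j
    + D / 2 * √(1 - c) * (podeV₂ c i + podeV₂ c j)

lemma podeV₁_pode (c x : ℝ) :
    podeV₁ (pode c x) = if x < c / 2 then 1 else if x < c then -1 else 0 := by
  unfold pode; split_ifs <;> rfl

lemma podeV₂_pode {c : ℝ} (hc : 0 < c) (x : ℝ) :
    podeV₂ c (pode c x) = if x < c then √(1 - c) else -c / √(1 - c) := by
  unfold pode; split_ifs <;> first | rfl | linarith

lemma exists_sqrt_one_sub_eq {c : ℝ} (hc1 : c < 1) :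
    ∃ s : ℝ, s ≠ 0 ∧ √(1 - c) = s ∧ c = 1 - s ^ 2 :=
  ⟨√(1 - c), (Real.sqrt_pos.2 (by linarith)).ne', rfl,
    by rw [Real.sq_sqrt (by linarith)]; ring⟩

section TripodalKernel

variable {c : ℝ} (hc1 : c < 1) (e A B D : ℝ)
include hc1

lemma sum_podeWidth_mul_tripodalKernel (i : Fin 3) :
    ∑ j, podeWidth c j * tripodalKernel c e A B D i j =
      e + D / 2 * √(1 - c) * podeV₂ c i := by
  fin_cases i <;>
  · simp only [Fin.sum_univ_three, tripodalKernel, podeWidth, podeV₁, podeV₂, Matrix.cons_val,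
      Fin.zero_eta, Fin.mk_one, Fin.reduceFinMk]
    obtain ⟨s, hs0, hs, rfl⟩ := exists_sqrt_one_sub_eq hc1
    rw [hs]
    field_simp
    ring

lemma edgeDensity_tripodalKernel :
    ∑ i, podeWidth c i * ∑ j, podeWidth c j * tripodalKernel c e A B D i j = e := by
  simp only [sum_podeWidth_mul_tripodalKernel hc1]
  simp only [Fin.sum_univ_three, podeWidth, podeV₂, Matrix.cons_val]
  obtain ⟨s, hs0, hs, rfl⟩ := exists_sqrt_one_sub_eq hc1
  rw [hs]
  field_simp
  ring

lemma triangleDensity_tripodalKernel :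
    ∑ i, podeWidth c i * ∑ j, podeWidth c j * ∑ k, podeWidth c k *
      (tripodalKernel c e A B D i j * tripodalKernel c e A B D j k * tripodalKernel c e A B D k i) =
      e ^ 3 + (3 / 4) * e * c * (1 - c) * D ^ 2 + (3 / 4) * c ^ 2 * (1 - c) * B * D ^ 2
        + c ^ 3 * (B ^ 3 - A ^ 3) := by
  simp only [Fin.sum_univ_three, tripodalKernel, podeWidth, podeV₁, podeV₂, Matrix.cons_val]
  obtain ⟨s, hs0, hs, rfl⟩ := exists_sqrt_one_sub_eq hc1
  rw [hs]
  field_simp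
  ring

end TripodalKernel
end

theorem stmt_11 (c e A B D : ℝ) (hc : 0 < c) (hc1 : c < 1)
    (v₁ v₂ : ℝ → ℝ)
    (hv₁ : ∀ x, v₁ x = if x < c / 2 then 1 else if x < c then -1 else 0)
    (hv₂ : ∀ x, v₂ x = if x < c then Real.sqrt (1 - c) else -c / Real.sqrt (1 - c))
    (g : ℝ → ℝ → ℝ)
    (hg : ∀ x y, g x y = e - A * v₁ x * v₁ y + B * v₂ x * v₂ y
      + (D / 2) * Real.sqrt (1 - c) * (v₂ x + v₂ y)) :
    (∀ x, x < c → (∫ y in (0 : ℝ)..1, g x y) = e + (1 - c) * D / 2) ∧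
    (∀ x, c ≤ x → (∫ y in (0 : ℝ)..1, g x y) = e - c * D / 2) ∧
    (∫ x in (0 : ℝ)..1, ∫ y in (0 : ℝ)..1, g x y) = e ∧
    (∫ x in (0 : ℝ)..1, ∫ y in (0 : ℝ)..1, ∫ z in (0 : ℝ)..1, g x y * g y z * g z x) =
      e ^ 3 + (3 / 4) * e * c * (1 - c) * D ^ 2 + (3 / 4) * c ^ 2 * (1 - c) * B * D ^ 2
        + c ^ 3 * (B ^ 3 - A ^ 3) := by
  have hpode := integral_comp_pode hc.le hc1.le
  have hgK : g = fun x y => tripodalKernel c e A B D (pode c x) (pode c y) := by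
    funext x y
    simp only [hg, hv₁, hv₂, tripodalKernel, podeV₁_pode, podeV₂_pode hc]
  have degree : ∀ x, ∫ y in (0 : ℝ)..1, g x y = e + D / 2 * √(1 - c) * v₂ x := fun x => by
    rw [hgK, hpode, sum_podeWidth_mul_tripodalKernel hc1, podeV₂_pode hc, hv₂]
  obtain ⟨s, hs0, hs, hcs⟩ := exists_sqrt_one_sub_eq hc1
  refine ⟨fun x hx => ?_, fun x hx => ?_, ?_, ?_⟩
  · rw [degree, hv₂, if_pos hx, hs, hcs]
    ring
  · rw [degree, hv₂, if_neg (not_lt.2 hx), hs]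
    field_simp
    ring
  · simp only [hgK]
    rw [edgeDensity_of_step hpode, edgeDensity_tripodalKernel hc1]
  · simp only [hgK]
    rw [triangleDensity_of_step hpode, triangleDensity_tripodalKernel hc1]
end

section
/- Fix e ∈ (0,1) and reals A, B with e+|A|+|B| < 1 and e-|A|-|B| > 0. For small c > 0 let S(c) = (c²/2)[H(e-A+B(1-c)) + H(e+A+B(1-c))] + 2c(1-c)H(e-cB) + (1-c)²·H(e + c²B/(1-c)). Then lim_{c→0⁺} (S(c) - H(e))/c² = (1/2)·[H(e+A+B) + H(e-A+B) - 2H(e) - 2B·H'(e)]. -/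
/-- The binary entropy function. -/
noncomputable def binEntropy (u : ℝ) : ℝ := -(u * Real.log u + (1 - u) * Real.log (1 - u))

/-!
Subtracting `H(e) = (c² + 2c(1-c) + (1-c)²) H(e)` splits `(S(c) - H(e)) / c²` into
`½ (H(e-A+B(1-c)) + H(e+A+B(1-c)))`, which tends to `½ (H(e-A+B) + H(e+A+B))` by continuity,
`2(1-c)` times a difference quotient of `H` at `e` with increment `-cB`, tending to `-2B H'(e)`,
`(1-c)²` times a difference quotient with increment `c²B/(1-c)`, tending to `B H'(e)`, and `-H(e)`.
-/

open Filter Topology Asymptotics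

theorem binEntropy_eq_real_binEntropy : binEntropy = Real.binEntropy := by
  funext p
  simp only [binEntropy, Real.binEntropy, Real.log_inv]
  ring

theorem HasDerivAt.tendsto_sub_div_of_tendsto {α : Type*} {l : Filter α} {f : ℝ → ℝ}
    {f' x K : ℝ} {r k : α → ℝ} (hf : HasDerivAt f f' x) (hr : Tendsto r l (𝓝 0))
    (hr0 : ∀ᶠ a in l, r a ≠ 0) (hk : Tendsto k l (𝓝 K)) :
    Tendsto (fun a => (f (x + r a * k a) - f x) / r a) l (𝓝 (f' * K)) := by
  have hx : Tendsto (fun a => x + r a * k a) l (𝓝 x) := by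
    simpa using tendsto_const_nhds.add (hr.mul hk)
  have hrk : (fun a => x + r a * k a - x) =O[l] r := by
    simpa using (isBigO_refl r l).mul (hk.isBigO_one ℝ)
  have hrem : Tendsto
      (fun a => (f (x + r a * k a) - f x - (x + r a * k a - x) * f') / r a) l (𝓝 0) :=
    ((hf.isLittleO.comp_tendsto hx).trans_isBigO hrk).tendsto_div_nhds_zero
  have hsum : Tendsto (fun a => (f (x + r a * k a) - f x - (x + r a * k a - x) * f') / r a
      + f' * k a) l (𝓝 (f' * K)) := by
    simpa using hrem.add (hk.const_mul f')
  refine hsum.congr' ?_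
  filter_upwards [hr0] with a ha
  field_simp
  ring

theorem tripodal_entropy_split (c a b y z h : ℝ) (hc : c ≠ 0) :
    ((c ^ 2 / 2) * (a + b) + 2 * c * (1 - c) * y + (1 - c) ^ 2 * z - h) / c ^ 2
      = 1 / 2 * (a + b) + 2 * (1 - c) * ((y - h) / c)
        + (1 - c) ^ 2 * ((z - h) / c ^ 2) - h := by
  field_simp
  ring

theorem stmt_12_general (e A B : ℝ) (he : e ∈ Set.Ioo (0 : ℝ) 1) :
    Filter.Tendsto
      (fun c : ℝ =>
        ((c ^ 2 / 2) * (binEntropy (e - A + B * (1 - c)) + binEntropy (e + A + B * (1 - c)))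
          + 2 * c * (1 - c) * binEntropy (e - c * B)
          + (1 - c) ^ 2 * binEntropy (e + c ^ 2 * B / (1 - c)) - binEntropy e) / c ^ 2)
      (nhdsWithin 0 (Set.Ioi 0))
      (nhds ((1 / 2) * (binEntropy (e + A + B) + binEntropy (e - A + B) - 2 * binEntropy e
        - 2 * B * deriv binEntropy e))) := by
  rw [binEntropy_eq_real_binEntropy]
  set H := Real.binEntropy
  have hH : HasDerivAt H (deriv H e) e :=
    (Real.differentiableAt_binEntropy he.1.ne' he.2.ne).hasDerivAt
  have hc : ∀ᶠ c in 𝓝[>] (0 : ℝ), c ≠ 0 := eventually_mem_nhdsWithin.mono fun c hc => hc.ne'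
  have hcont : ∀ {g : ℝ → ℝ} {y : ℝ}, ContinuousAt g 0 → g 0 = y → Tendsto g (𝓝[>] 0) (𝓝 y) :=
    fun hg hy => tendsto_nhdsWithin_of_tendsto_nhds (hy ▸ hg.tendsto)
  have hid : Tendsto (fun c : ℝ => c) (𝓝[>] 0) (𝓝 0) := hcont continuousAt_id rfl
  have hquot : Tendsto (fun c : ℝ => B / (1 - c)) (𝓝[>] 0) (𝓝 B) :=
    hcont (continuousAt_const.div (by fun_prop) (by norm_num)) (by simp)
  have hlin := hH.tendsto_sub_div_of_tendsto hid hc (tendsto_const_nhds (x := -B))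
  have hquad := hH.tendsto_sub_div_of_tendsto (by simpa using hid.pow 2)
    (hc.mono fun c hc => pow_ne_zero 2 hc) hquot
  have hfirst : Tendsto (fun c => 1 / 2 * (H (e - A + B * (1 - c)) + H (e + A + B * (1 - c))))
      (𝓝[>] 0) (𝓝 (1 / 2 * (H (e - A + B) + H (e + A + B)))) :=
    hcont (by fun_prop) (by norm_num)
  have hcross : Tendsto (fun c => 2 * (1 - c) * ((H (e + c * -B) - H e) / c))
      (𝓝[>] 0) (𝓝 (2 * (deriv H e * -B))) := by
    simpa using
      (hcont (g := fun c : ℝ => 2 * (1 - c)) (y := 2) (by fun_prop) (by norm_num)).mul hlin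
  have hdiag : Tendsto (fun c => (1 - c) ^ 2 * ((H (e + c ^ 2 * (B / (1 - c))) - H e) / c ^ 2))
      (𝓝[>] 0) (𝓝 (deriv H e * B)) := by
    simpa using
      (hcont (g := fun c : ℝ => (1 - c) ^ 2) (y := 1) (by fun_prop) (by norm_num)).mul hquad
  rw [show 1 / 2 * (H (e + A + B) + H (e - A + B) - 2 * H e - 2 * B * deriv H e)
      = 1 / 2 * (H (e - A + B) + H (e + A + B)) + 2 * (deriv H e * -B) + deriv H e * B - H e by
    ring]
  refine (((hfirst.add hcross).add hdiag).sub_const (H e)).congr' ?_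
  filter_upwards [hc] with c hc
  rw [tripodal_entropy_split c _ _ _ _ _ hc]
  simp only [mul_neg, ← sub_eq_add_neg, mul_div_assoc]

theorem stmt_12 (e A B : ℝ) (he : e ∈ Set.Ioo (0 : ℝ) 1)
    (h1 : e + |A| + |B| < 1) (h2 : 0 < e - |A| - |B|) :
    Filter.Tendsto
      (fun c : ℝ =>
        ((c ^ 2 / 2) * (binEntropy (e - A + B * (1 - c)) + binEntropy (e + A + B * (1 - c)))
          + 2 * c * (1 - c) * binEntropy (e - c * B)
          + (1 - c) ^ 2 * binEntropy (e + c ^ 2 * B / (1 - c)) - binEntropy e) / c ^ 2)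
      (nhdsWithin 0 (Set.Ioi 0))
      (nhds ((1 / 2) * (binEntropy (e + A + B) + binEntropy (e - A + B) - 2 * binEntropy e
        - 2 * B * deriv binEntropy e))) :=
  stmt_12_general e A B he
end

section
/- Fix e ∈ (0,1) with e ≠ 1/2 and β ∈ ℝ, and let F(A,B) = [H(e+A+B) + H(e-A+B) - 2H(e) - 2B·H'(e)]/(A³-B³)^{2/3}. Then lim_{A→0⁺} (F(A, βA²) - H''(e))/A² = H''(e)·β² + H'''(e)·β + H''''(e)/12. -/
/-!
Along `B = βA²` write `u± = ±A + βA²`. Taylor's theorem to order four at `e` gives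
`H(e+u₊) + H(e+u₋) - 2H(e) - 2BH'(e) = H''(e)A² + (H''(e)β² + H'''(e)β + H''''(e)/12)A⁴ + o(A⁴)`,
the odd powers of `A` cancelling between `u₊` and `u₋`, while the denominator is
`(A³ - B³)^{2/3} = A²(1 - β³A³)^{2/3} = A²(1 + O(A³))`, whose correction is invisible at the
order `A²` of the quotient.
-/

open Filter Topology Asymptotics Nat

theorem ContDiffAt.isLittleO_sub_taylor {E : Type*} [NormedAddCommGroup E] [NormedSpace ℝ E]
    {f : ℝ → E} {x₀ : ℝ} {n : ℕ} (hf : ContDiffAt ℝ n f x₀) :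
    (fun h => f (x₀ + h) - ∑ k ∈ Finset.range (n + 1), ((k ! : ℝ)⁻¹ * h ^ k) • iteratedDeriv k f x₀)
      =o[𝓝 0] (· ^ n) := by
  obtain ⟨u, hu, hfu⟩ := hf.contDiffOn le_rfl (by simp)
  obtain ⟨ε, hε, hball⟩ := Metric.mem_nhds_iff.1 hu
  have hs : Metric.ball x₀ ε ∈ 𝓝 x₀ := Metric.ball_mem_nhds x₀ hε
  have htaylor := taylor_isLittleO (convex_ball x₀ ε) (Metric.mem_ball_self hε) (hfu.mono hball)
  rw [nhdsWithin_eq_nhds.2 hs] at htaylor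
  have hshift : Tendsto (fun h : ℝ => x₀ + h) (𝓝 0) (𝓝 x₀) := by
    simpa using (continuous_const_add x₀).tendsto 0
  refine (htaylor.comp_tendsto hshift).congr (fun h => ?_) (fun h => by simp)
  simp only [Function.comp_apply, taylor_within_apply, add_sub_cancel_left]
  congr 1
  refine Finset.sum_congr rfl fun k hk => ?_
  rw [iteratedDerivWithin_eq_iteratedDeriv (Metric.isOpen_ball.uniqueDiffOn)
    (hf.of_le (by exact_mod_cast Finset.mem_range_succ_iff.1 hk)) (Metric.mem_ball_self hε)]

theorem ContDiffAt.isLittleO_add_sub_parabola {f : ℝ → ℝ} {x₀ : ℝ} (β : ℝ)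
    (hf : ContDiffAt ℝ 4 f x₀) :
    (fun A => f (x₀ + A + β * A ^ 2) + f (x₀ - A + β * A ^ 2) - 2 * f x₀
      - 2 * (β * A ^ 2) * deriv f x₀
      - (iteratedDeriv 2 f x₀ * A ^ 2 + (iteratedDeriv 2 f x₀ * β ^ 2
        + iteratedDeriv 3 f x₀ * β + iteratedDeriv 4 f x₀ / 12) * A ^ 4)) =o[𝓝 0] (· ^ 4) := by
  set c : ℕ → ℝ := fun k => iteratedDeriv k f x₀
  set R : ℝ → ℝ := fun h => f (x₀ + h) - ∑ k ∈ Finset.range 5, ((k ! : ℝ)⁻¹ * h ^ k) * c k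
    with hR_def
  have hR : R =o[𝓝 0] (· ^ 4) := by simpa using hf.isLittleO_sub_taylor
  have hR_comp : ∀ σ : ℝ, (fun A => R (σ * A + β * A ^ 2)) =o[𝓝 0] (· ^ 4) := by
    intro σ
    have hu : (fun A : ℝ => σ * A + β * A ^ 2) =O[𝓝 0] id :=
      ((isBigO_refl id _).const_mul_left σ).add
        ((isLittleO_pow_id (by norm_num)).const_mul_left β).isBigO
    exact (hR.comp_tendsto (hu.trans_tendsto tendsto_id)).trans_isBigO (hu.pow 4)
  -- `A⁶ Q(A)` collects the terms of order above four of the two Taylor polynomials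
  set Q : ℝ → ℝ := fun A => c 3 * β ^ 3 / 3 + c 4 * (β ^ 2 / 2 + β ^ 4 * A ^ 2 / 12)
  have hQ : (fun A : ℝ => A ^ 4 * (A ^ 2 * Q A)) =o[𝓝 0] (· ^ 4) := by
    have : Tendsto (fun A : ℝ => A ^ 2 * Q A) (𝓝 0) (𝓝 0) :=
      (by fun_prop : Continuous fun A : ℝ => A ^ 2 * Q A).tendsto' 0 0 (by simp)
    simpa using (isBigO_refl (· ^ 4) (𝓝 (0 : ℝ))).mul_isLittleO (isLittleO_one_iff ℝ |>.2 this)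
  refine ((hR_comp 1).add (hR_comp (-1))).add hQ |>.congr_left fun A => ?_
  simp only [hR_def, Finset.sum_range_succ, Finset.sum_range_zero, c, iteratedDeriv_zero,
    iteratedDeriv_one, Q]
  norm_num [Nat.factorial]
  ring_nf

theorem isLittleO_one_sub_cube_rpow_sub_one (β p : ℝ) :
    (fun A : ℝ => (1 - β ^ 3 * A ^ 3) ^ p - 1) =o[𝓝 0] (· ^ 2) := by
  have hg : DifferentiableAt ℝ (fun t : ℝ => (1 - t) ^ p) 0 :=
    (differentiableAt_const _ |>.sub differentiableAt_id).rpow_const (by norm_num)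
  have hcube : Tendsto (fun A : ℝ => β ^ 3 * A ^ 3) (𝓝 0) (𝓝 0) :=
    (by fun_prop : Continuous fun A : ℝ => β ^ 3 * A ^ 3).tendsto' 0 0 (by simp)
  have hcube_small : (fun A : ℝ => β ^ 3 * A ^ 3) =o[𝓝 0] (· ^ 2) :=
    ((isBigO_refl _ _).const_mul_left _).trans_isLittleO (isLittleO_pow_pow (by norm_num))
  have h := (hg.hasDerivAt.isBigO_sub.comp_tendsto hcube).trans_isLittleO
    (by simpa [Function.comp_def] using hcube_small)
  simpa [Function.comp_def] using h

theorem cube_sub_cube_rpow_two_div_three {A β : ℝ} (hA : 0 ≤ A) (hw : 0 ≤ 1 - β ^ 3 * A ^ 3) :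
    (A ^ 3 - (β * A ^ 2) ^ 3) ^ ((2 : ℝ) / 3) = A ^ 2 * (1 - β ^ 3 * A ^ 3) ^ ((2 : ℝ) / 3) := by
  rw [show A ^ 3 - (β * A ^ 2) ^ 3 = A ^ 3 * (1 - β ^ 3 * A ^ 3) by ring,
    Real.mul_rpow (by positivity) hw, ← Real.rpow_natCast A 3, ← Real.rpow_mul hA]
  norm_num

theorem ContDiffAt.tendsto_parabola_quotient {f : ℝ → ℝ} {x₀ : ℝ} (β : ℝ)
    (hf : ContDiffAt ℝ 4 f x₀) :
    Tendsto (fun A : ℝ => ((f (x₀ + A + β * A ^ 2) + f (x₀ - A + β * A ^ 2) - 2 * f x₀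
      - 2 * (β * A ^ 2) * deriv f x₀) / (A ^ 3 - (β * A ^ 2) ^ 3) ^ ((2 : ℝ) / 3)
      - iteratedDeriv 2 f x₀) / A ^ 2) (𝓝[>] 0)
      (𝓝 (iteratedDeriv 2 f x₀ * β ^ 2 + iteratedDeriv 3 f x₀ * β
        + iteratedDeriv 4 f x₀ / 12)) := by
  set c := iteratedDeriv 2 f x₀
  set L := iteratedDeriv 2 f x₀ * β ^ 2 + iteratedDeriv 3 f x₀ * β + iteratedDeriv 4 f x₀ / 12
  set N := fun A : ℝ => f (x₀ + A + β * A ^ 2) + f (x₀ - A + β * A ^ 2) - 2 * f x₀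
      - 2 * (β * A ^ 2) * deriv f x₀
  set s := fun A : ℝ => (1 - β ^ 3 * A ^ 3) ^ ((2 : ℝ) / 3)
  have hs := isLittleO_one_sub_cube_rpow_sub_one β (2 / 3)
  have hs_one : Tendsto s (𝓝 0) (𝓝 1) := tendsto_sub_nhds_zero_iff.1 <|
    hs.trans_tendsto (by simpa using (continuous_pow 2).tendsto (0 : ℝ))
  have hlim : Tendsto (fun A => ((N A - (c * A ^ 2 + L * A ^ 4)) / A ^ 4 + L
      - c * ((s A - 1) / A ^ 2)) / s A) (𝓝 0) (𝓝 L) := by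
    have h := (((hf.isLittleO_add_sub_parabola β).tendsto_div_nhds_zero.add_const L).sub
      (hs.tendsto_div_nhds_zero.const_mul c)).div hs_one one_ne_zero
    rwa [zero_add, mul_zero, sub_zero, div_one] at h
  have hw : ∀ᶠ A : ℝ in 𝓝 0, 0 < 1 - β ^ 3 * A ^ 3 :=
    ((by fun_prop : Continuous fun A : ℝ => 1 - β ^ 3 * A ^ 3).tendsto' 0 1 (by simp)).eventually
      (lt_mem_nhds one_pos)
  refine (hlim.mono_left nhdsWithin_le_nhds).congr' ?_
  filter_upwards [self_mem_nhdsWithin, nhdsWithin_le_nhds hw] with A (hA : 0 < A) hwA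
  have hsA : s A ≠ 0 := (Real.rpow_pos_of_pos hwA _).ne'
  rw [cube_sub_cube_rpow_two_div_three hA.le hwA.le]
  change _ = (N A / (A ^ 2 * s A) - c) / A ^ 2
  field_simp
  ring

theorem contDiffAt_binEntropy {n : WithTop ℕ∞} {u : ℝ} (h0 : u ≠ 0) (h1 : u ≠ 1) :
    ContDiffAt ℝ n binEntropy u := by
  have h1' : 1 - u ≠ 0 := sub_ne_zero.2 h1.symm
  unfold binEntropy
  fun_prop (disch := assumption)

theorem stmt_16_general (e β : ℝ) (he : e ∈ Set.Ioo (0 : ℝ) 1)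
    (F : ℝ → ℝ → ℝ)
    (hF : ∀ A B, F A B = (binEntropy (e + A + B) + binEntropy (e - A + B) - 2 * binEntropy e
      - 2 * B * deriv binEntropy e) / ((A ^ 3 - B ^ 3) ^ ((2 : ℝ) / 3))) :
    Filter.Tendsto
      (fun A : ℝ => (F A (β * A ^ 2) - iteratedDeriv 2 binEntropy e) / A ^ 2)
      (nhdsWithin 0 (Set.Ioi 0))
      (nhds (iteratedDeriv 2 binEntropy e * β ^ 2 + iteratedDeriv 3 binEntropy e * β +
        iteratedDeriv 4 binEntropy e / 12)) := by
  simp only [hF]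
  exact (contDiffAt_binEntropy he.1.ne' he.2.ne).tendsto_parabola_quotient β

theorem stmt_16 (e β : ℝ) (he : e ∈ Set.Ioo (0 : ℝ) 1) (hne : e ≠ 1 / 2)
    (F : ℝ → ℝ → ℝ)
    (hF : ∀ A B, F A B = (binEntropy (e + A + B) + binEntropy (e - A + B) - 2 * binEntropy e
      - 2 * B * deriv binEntropy e) / ((A ^ 3 - B ^ 3) ^ ((2 : ℝ) / 3))) :
    Filter.Tendsto
      (fun A : ℝ => (F A (β * A ^ 2) - iteratedDeriv 2 binEntropy e) / A ^ 2)
      (nhdsWithin 0 (Set.Ioi 0))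
      (nhds (iteratedDeriv 2 binEntropy e * β ^ 2 + iteratedDeriv 3 binEntropy e * β +
        iteratedDeriv 4 binEntropy e / 12)) :=
  stmt_16_general e β he F hF
end
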